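/- For all integers p, q ≥ 0, the Delannoy numbers satisfy the recursive relation D(p,q) = C(p,q) + (-1)^{q-1} · ∑_{r=0}^{q-1} (-1)^r · C(p+1, q-r) · D(p,r). -/

import Mathlib

/-!
The generating function of `q ↦ D(p,q)` is `(1 + X)^p / (1 - X)^(p+1)`: expanding
`D(p,q) = ∑ᵢ C(p,i) 2^i C(q,i)` and using `∑_q C(q,i) X^q = X^i / (1 - X)^(i+1)`, the identity
`∑_q D(p,q) X^q · (1 - X)^(p+1) = ∑ᵢ C(p,i) (2X)^i (1 - X)^(p-i) = (1 + X)^p` is the binomial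
theorem. Substituting `X ↦ -X` and comparing coefficients of `X^q` gives
`∑_{r ≤ q} (-1)^r C(p+1, q-r) D(p,r) = (-1)^q C(p,q)`, which is the recursion with its last
term `r = q` separated.
-/

/-- The Delannoy numbers: `D(p,q) = ∑_{i=0}^{p} C(p,i) C(q,i) 2^i`. -/
def delannoy (p q : ℕ) : ℕ :=
  ∑ i ∈ Finset.range (p + 1), p.choose i * q.choose i * 2 ^ i

open Finset PowerSeries

variable {R : Type*} [CommRing R]

namespace PowerSeries

theorem mk_choose_mul_one_sub_pow (i : ℕ) :
    (mk fun n ↦ (n.choose i : R)) * (1 - X) ^ (i + 1) = X ^ i := by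
  have shift : (mk fun n ↦ (n.choose i : R)) = X ^ i * mk fun n ↦ ((i + n).choose i : R) := by
    ext n
    rw [coeff_X_pow_mul', coeff_mk]
    split_ifs with h
    · rw [coeff_mk, Nat.add_sub_cancel' h]
    · rw [Nat.choose_eq_zero_of_lt (not_le.mp h), Nat.cast_zero]
  rw [shift, mul_assoc, mk_add_choose_mul_one_sub_pow_eq_one, mul_one]

theorem coeff_one_add_X_pow (n k : ℕ) : coeff k ((1 + X : R⟦X⟧) ^ n) = n.choose k := by
  rw [← Polynomial.coe_X, ← Polynomial.coe_one, ← Polynomial.coe_add, ← Polynomial.coe_pow,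
    Polynomial.coeff_coe, Polynomial.coeff_one_add_X_pow]

end PowerSeries

theorem mk_delannoy_mul_one_sub_pow (p : ℕ) :
    (mk fun q ↦ (delannoy p q : R)) * (1 - X) ^ (p + 1) = (1 + X) ^ p := by
  have expand : (mk fun q ↦ (delannoy p q : R)) =
      ∑ i ∈ range (p + 1), C ((p.choose i * 2 ^ i : ℕ) : R) * mk fun n ↦ (n.choose i : R) := by
    ext q
    simp only [coeff_mk, map_sum, coeff_C_mul, delannoy]
    push_cast
    exact sum_congr rfl fun i _ ↦ by ring
  have binomial : (1 + X : R⟦X⟧) ^ p = (C (2 : R) * X + (1 - X)) ^ p := by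
    congr 1
    rw [map_ofNat]
    ring
  rw [expand, binomial, add_pow, sum_mul]
  refine sum_congr rfl fun i hi ↦ ?_
  have hip : i ≤ p := Nat.lt_succ_iff.mp (mem_range.mp hi)
  have split : (1 - X : R⟦X⟧) ^ (p + 1) = (1 - X) ^ (i + 1) * (1 - X) ^ (p - i) := by
    rw [← pow_add]
    congr 1
    omega
  rw [split, ← mul_assoc, mul_assoc (C _), mk_choose_mul_one_sub_pow, mul_pow, ← map_pow]
  push_cast
  simp only [map_mul, map_natCast]
  ring

theorem sum_neg_one_pow_mul_choose_mul_delannoy (p q : ℕ) :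
    ∑ r ∈ range (q + 1), (-1 : R) ^ r * ((p + 1).choose (q - r) : R) * (delannoy p r : R) =
      (-1) ^ q * p.choose q := by
  have series := congrArg (rescale (-1 : R)) (mk_delannoy_mul_one_sub_pow (R := R) p)
  rw [map_mul, map_pow, map_sub, map_one, rescale_neg_one_X, sub_neg_eq_add, rescale_mk] at series
  have coeffs := congrArg (coeff q) series
  simp only [coeff_rescale, coeff_mul, coeff_mk, coeff_one_add_X_pow] at coeffs
  rw [← coeffs, Nat.sum_antidiagonal_eq_sum_range_succ fun r s ↦ (-1 : R) ^ r * (delannoy p r : R) *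
    ((p + 1).choose s : R)]
  exact sum_congr rfl fun r _ ↦ by ring

/-- A recursive relation of the Delannoy numbers:
`D(p,q) = C(p,q) + (-1)^{q-1} · ∑_{r=0}^{q-1} (-1)^r · C(p+1, q-r) · D(p,r)`. -/
theorem delannoy_recursion (p q : ℕ) :
    (delannoy p q : ℚ) =
      (p.choose q : ℚ) + (-1 : ℚ) ^ ((q : ℤ) - 1) *
        ∑ r ∈ Finset.range q,
          (-1 : ℚ) ^ r * ((p + 1).choose (q - r) : ℚ) * (delannoy p r : ℚ) := by
  have h := sum_neg_one_pow_mul_choose_mul_delannoy (R := ℚ) p q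
  rw [sum_range_succ, Nat.sub_self, Nat.choose_zero_right, Nat.cast_one, mul_one] at h
  have sign : (-1 : ℚ) ^ ((q : ℤ) - 1) = -(-1) ^ q := by
    rw [zpow_sub_one₀ (by norm_num), zpow_natCast, inv_neg_one, mul_neg_one]
  have sign_sq : (-1 : ℚ) ^ q * (-1) ^ q = 1 := by
    rw [← mul_pow, neg_one_mul, neg_neg, one_pow]
  rw [sign]
  linear_combination (-1 : ℚ) ^ q * h - ((delannoy p q : ℚ) - p.choose q) * sign_sq
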